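/- Let g ∈ R⟨X⟩ be a polynomial and m ∈ supp(g) such that σ(m) = σ(g). If a polynomial f can be rewritten to h = f + λ·a·g·b using (g, m) (so a, b ∈ ⟨X⟩ are monomials with a·m·b ∈ supp(f) and λ ∈ R), then σ(f) ⊆ σ(h) and σ(f) ⊆ σ(a·m·b). -/

import Mathlib

open scoped BigOperators

universe u₁ u₂ u₃ u₄ u₅

/-- A labelled quiver: a directed multigraph with edges labelled in `X`. -/
structure LQuiver (V : Type u₁) (E : Type u₂) (X : Type u₃) where
  src : E → V
  tgt : E → V
  lab : E → X

namespace LQuiver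

variable {V : Type u₁} {E : Type u₂} {X : Type u₃}

/-- Paths in the quiver (possibly empty). -/
inductive Walk (Q : LQuiver V E X) : V → V → Type (max u₁ u₂)
  | nil (v : V) : Walk Q v v
  | cons {u : V} (e : E) (p : Walk Q u (Q.src e)) : Walk Q u (Q.tgt e)

/-- The label of a path, a word in the free monoid `⟨X⟩`. -/
def wlabel (Q : LQuiver V E X) : ∀ {u v : V}, Q.Walk u v → FreeMonoid X
  | _, _, .nil _ => 1
  | _, _, .cons e p => FreeMonoid.of (Q.lab e) * Q.wlabel p

/-- The signature `σ(m)` of a monomial (word) `m`. -/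
def sigW (Q : LQuiver V E X) (m : FreeMonoid X) : Set (V × V) :=
  {p : V × V | ∃ w : Q.Walk p.1 p.2, Q.wlabel w = m}

variable {R : Type u₄} [CommRing R]

/-- The signature `σ(f)` of a noncommutative polynomial `f ∈ R⟨X⟩`. -/
def sig (Q : LQuiver V E X) (f : MonoidAlgebra R (FreeMonoid X)) : Set (V × V) :=
  ⋂ m ∈ f.coeff.support, Q.sigW m

/-- A polynomial is compatible with `Q` if its signature is nonempty. -/
def Compatible (Q : LQuiver V E X) (f : MonoidAlgebra R (FreeMonoid X)) : Prop :=
  (Q.sig f).Nonempty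

/-- The projection `s(f)` of `σ(f)` on sources. -/
def srcSet (Q : LQuiver V E X) (f : MonoidAlgebra R (FreeMonoid X)) : Set V :=
  Prod.fst '' Q.sig f

/-- The projection `t(f)` of `σ(f)` on targets. -/
def tgtSet (Q : LQuiver V E X) (f : MonoidAlgebra R (FreeMonoid X)) : Set V :=
  Prod.snd '' Q.sig f

/-- `f` is a `Q`-consequence of `F`. -/
def QConsequence (Q : LQuiver V E X) (F : Set (MonoidAlgebra R (FreeMonoid X)))
    (f : MonoidAlgebra R (FreeMonoid X)) : Prop :=
  Q.Compatible f ∧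
  ∃ (n : ℕ) (g a b : Fin n → MonoidAlgebra R (FreeMonoid X)),
    (∀ i, g i ∈ F) ∧
    f = ∑ i, a i * g i * b i ∧
    ∀ uv ∈ Q.sig f, ∀ i, ∃ ui vi : V,
      (uv.1, ui) ∈ Q.sig (b i) ∧ (ui, vi) ∈ Q.sig (g i) ∧ (vi, uv.2) ∈ Q.sig (a i)

end LQuiver

/-- The monomial `m` regarded as a polynomial in `R⟨X⟩`. -/
noncomputable def mono (R : Type u₄) [CommRing R] {X : Type u₃} (m : FreeMonoid X) :
    MonoidAlgebra R (FreeMonoid X) :=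
  MonoidAlgebra.single m 1

/-- One rewriting step with divisor monomials selected by `DM`. -/
def RewriteStep {R : Type u₄} [CommRing R] {X : Type u₃}
    (G : Set (MonoidAlgebra R (FreeMonoid X)))
    (DM : MonoidAlgebra R (FreeMonoid X) → Set (FreeMonoid X))
    (f h : MonoidAlgebra R (FreeMonoid X)) : Prop :=
  ∃ g ∈ G, ∃ m ∈ DM g, ∃ a b : FreeMonoid X, ∃ lam : R,
    a * m * b ∈ f.coeff.support ∧ h = f + lam • (mono R a * g * mono R b)

/-- A monomial order: a well-founded linear order compatible with multiplication. -/
def IsMonomialOrder {X : Type u₃} (ord : LinearOrder (FreeMonoid X)) : Prop :=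
  WellFounded ord.lt ∧
    ∀ a b m m' : FreeMonoid X, ord.le m m' → ord.le (a * m * b) (a * m' * b)

/-- The leading monomial of a polynomial w.r.t. a linear order on monomials
(defined as `1` for the zero polynomial). -/
noncomputable def LM {K : Type u₄} [CommRing K] {X : Type u₃}
    (ord : LinearOrder (FreeMonoid X)) (f : MonoidAlgebra K (FreeMonoid X)) : FreeMonoid X :=
  letI := ord
  letI : Decidable (f = 0) := Classical.dec _
  if h : f = 0 then 1 else f.coeff.support.max' (Finsupp.support_nonempty_iff.mpr (MonoidAlgebra.coeff_eq_zero.not.mpr h))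

/-- One step of standard polynomial reduction w.r.t. a set `G` and a monomial order. -/
def ReduceStep {K : Type u₄} [Field K] {X : Type u₃} (ord : LinearOrder (FreeMonoid X))
    (G : Set (MonoidAlgebra K (FreeMonoid X)))
    (f h : MonoidAlgebra K (FreeMonoid X)) : Prop :=
  ∃ g ∈ G, g ≠ 0 ∧ ∃ a b : FreeMonoid X,
    a * LM ord g * b ∈ f.coeff.support ∧
    h = f - (f.coeff (a * LM ord g * b) / g.coeff (LM ord g)) • (mono K a * g * mono K b)

/-- `f` is `Q`-order compatible w.r.t. the order `ord`. -/
def QOrderCompatible {V : Type u₁} {E : Type u₂} {X : Type u₃} {K : Type u₄} [CommRing K]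
    (Q : LQuiver V E X) (ord : LinearOrder (FreeMonoid X))
    (f : MonoidAlgebra K (FreeMonoid X)) : Prop :=
  Q.Compatible f ∧ Q.sigW (LM ord f) = Q.sig f

/-- A representation of a labelled quiver. -/
structure QRep (R : Type u₄) [CommRing R] {V : Type u₁} {E : Type u₂} {X : Type u₃}
    (Q : LQuiver V E X) where
  M : V → Type u₅
  [addcg : ∀ v, AddCommGroup (M v)]
  [mod : ∀ v, Module R (M v)]
  φ : (e : E) → M (Q.src e) →ₗ[R] M (Q.tgt e)

attribute [instance] QRep.addcg QRep.mod

namespace QRep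

variable {R : Type u₄} [CommRing R] {V : Type u₁} {E : Type u₂} {X : Type u₃}
  {Q : LQuiver V E X}

/-- The linear map induced by a path. -/
def walkMap (ρ : QRep R Q) : ∀ {u v : V}, Q.Walk u v → (ρ.M u →ₗ[R] ρ.M v)
  | _, _, .nil _ => LinearMap.id
  | _, _, .cons e p => (ρ.φ e).comp (ρ.walkMap p)

/-- The representation is consistent with the labelling: two paths with the same
source, target and label induce the same linear map. -/
def Consistent (ρ : QRep R Q) : Prop :=
  ∀ (u v : V) (p q : Q.Walk u v), Q.wlabel p = Q.wlabel q → ρ.walkMap p = ρ.walkMap q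

/-- The realization `φ_{v,w}(f)` of a polynomial `f` (for a consistent representation and
`(v,w) ∈ σ(f)`, this is the well-defined linear map of the paper). -/
noncomputable def real (ρ : QRep R Q) (v w : V) (f : MonoidAlgebra R (FreeMonoid X)) :
    ρ.M v →ₗ[R] ρ.M w :=
  ∑ m ∈ f.coeff.support, f.coeff m •
    (letI : Decidable (∃ p : Q.Walk v w, Q.wlabel p = m) := Classical.dec _
     if h : ∃ p : Q.Walk v w, Q.wlabel p = m then ρ.walkMap h.choose else 0)

end QRep

/-!
If `m'` ranges over `supp g`, then `σ(m) = σ(g) ⊆ σ(m')`. Signatures of words compose like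
relations, `σ(s t) = σ(t) ∘ σ(s)` (split a path at the junction of the two subwords), so
`σ(a m b) ⊆ σ(a m' b)` for every such `m'`, i.e. `σ(a m b) ⊆ σ(a g b)`. Since `a m b ∈ supp f`
we have `σ(f) ⊆ σ(a m b)`, and every monomial of `h` lies in `supp f` or in `a · supp g · b`.
-/

theorem exists_mem_support_of_mem_support_mono_mul_mul_mono {R X : Type*} [CommRing R]
    {g : MonoidAlgebra R (FreeMonoid X)} {a b n : FreeMonoid X}
    (hn : n ∈ (mono R a * g * mono R b).coeff.support) :
    ∃ m ∈ g.coeff.support, n = a * m * b := by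
  classical
  obtain ⟨am, ham, rfl⟩ :=
    Finset.mem_image.mp (MonoidAlgebra.support_coeff_mul_single_subset _ _ _ hn)
  obtain ⟨m, hm, rfl⟩ :=
    Finset.mem_image.mp (MonoidAlgebra.support_coeff_single_mul_subset _ _ _ ham)
  exact ⟨m, hm, rfl⟩

namespace LQuiver

variable {V E X : Type*} {Q : LQuiver V E X}

def Walk.append : ∀ {u v w : V}, Q.Walk u v → Q.Walk v w → Q.Walk u w
  | _, _, _, p, .nil _ => p
  | _, _, _, p, .cons e q => .cons e (p.append q)

theorem wlabel_append {u v w : V} (p : Q.Walk u v) (q : Q.Walk v w) :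
    Q.wlabel (p.append q) = Q.wlabel q * Q.wlabel p := by
  induction q with
  | nil => simp [Walk.append, wlabel]
  | cons e q ih => simp only [Walk.append, wlabel, ih, mul_assoc]

theorem exists_walk_of_wlabel_eq_mul {u v : V} (w : Q.Walk u v) {s t : FreeMonoid X}
    (hw : Q.wlabel w = s * t) :
    ∃ (x : V) (p : Q.Walk u x) (q : Q.Walk x v), Q.wlabel p = t ∧ Q.wlabel q = s := by
  induction w generalizing s with
  | nil =>
    obtain ⟨rfl, rfl⟩ := mul_eq_one'.mp (hw.symm.trans (by rw [wlabel]))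
    exact ⟨_, .nil _, .nil _, by rw [wlabel], by rw [wlabel]⟩
  | cons e w ih =>
    induction s using FreeMonoid.casesOn with
    | one => exact ⟨_, .cons e w, .nil _, hw.trans (one_mul t), by rw [wlabel]⟩
    | of_mul c s =>
      rw [wlabel, mul_assoc] at hw
      have hlist := congrArg FreeMonoid.toList hw
      rw [FreeMonoid.toList_of_mul, FreeMonoid.toList_of_mul, List.cons_eq_cons] at hlist
      obtain ⟨rfl, hw'⟩ := hlist
      obtain ⟨x, p, q, hp, rfl⟩ := ih (FreeMonoid.toList.injective hw')
      exact ⟨x, p, .cons e q, hp, by rw [wlabel]⟩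

theorem mem_sigW_mul {u v : V} {s t : FreeMonoid X} :
    (u, v) ∈ Q.sigW (s * t) ↔ ∃ x, (u, x) ∈ Q.sigW t ∧ (x, v) ∈ Q.sigW s := by
  constructor
  · rintro ⟨w, hw⟩
    obtain ⟨x, p, q, hp, hq⟩ := exists_walk_of_wlabel_eq_mul w hw
    exact ⟨x, ⟨p, hp⟩, ⟨q, hq⟩⟩
  · rintro ⟨x, ⟨p, rfl⟩, ⟨q, rfl⟩⟩
    exact ⟨p.append q, wlabel_append p q⟩

theorem sigW_mul_mul_subset_sigW_mul_mul {m m' : FreeMonoid X} (h : Q.sigW m ⊆ Q.sigW m')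
    (a b : FreeMonoid X) : Q.sigW (a * m * b) ⊆ Q.sigW (a * m' * b) := by
  rintro ⟨u, v⟩ huv
  obtain ⟨x, hb, hma⟩ := mem_sigW_mul.mp huv
  obtain ⟨y, hm, ha⟩ := mem_sigW_mul.mp hma
  exact mem_sigW_mul.mpr ⟨x, hb, mem_sigW_mul.mpr ⟨y, h hm, ha⟩⟩

variable {R : Type*} [CommRing R]

theorem subset_sig_iff {S : Set (V × V)} {f : MonoidAlgebra R (FreeMonoid X)} :
    S ⊆ Q.sig f ↔ ∀ m ∈ f.coeff.support, S ⊆ Q.sigW m :=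
  Set.subset_iInter₂_iff

theorem sig_subset_sigW {f : MonoidAlgebra R (FreeMonoid X)} {m : FreeMonoid X}
    (hm : m ∈ f.coeff.support) : Q.sig f ⊆ Q.sigW m :=
  subset_sig_iff.mp subset_rfl m hm

theorem sig_inter_sig_subset_sig_add (f g : MonoidAlgebra R (FreeMonoid X)) :
    Q.sig f ∩ Q.sig g ⊆ Q.sig (f + g) := by
  classical
  refine subset_sig_iff.mpr fun m hm => ?_
  rw [MonoidAlgebra.coeff_add] at hm
  rcases Finset.mem_union.mp (Finsupp.support_add hm) with hf | hg
  · exact Set.inter_subset_left.trans (sig_subset_sigW hf)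
  · exact Set.inter_subset_right.trans (sig_subset_sigW hg)

theorem sig_subset_sig_smul (r : R) (f : MonoidAlgebra R (FreeMonoid X)) :
    Q.sig f ⊆ Q.sig (r • f) :=
  subset_sig_iff.mpr fun _ hm => sig_subset_sigW (Finsupp.support_smul hm)

theorem sigW_mul_mul_subset_sig {g : MonoidAlgebra R (FreeMonoid X)} {m : FreeMonoid X}
    (hsig : Q.sigW m ⊆ Q.sig g) (a b : FreeMonoid X) :
    Q.sigW (a * m * b) ⊆ Q.sig (mono R a * g * mono R b) := by
  refine subset_sig_iff.mpr fun n hn => ?_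
  obtain ⟨m', hm', rfl⟩ := exists_mem_support_of_mem_support_mono_mul_mul_mono hn
  exact sigW_mul_mul_subset_sigW_mul_mul (hsig.trans (sig_subset_sigW hm')) a b

end LQuiver

theorem rew_and_signatures_general {V E X R : Type*} [CommRing R] (Q : LQuiver V E X)
    (g : MonoidAlgebra R (FreeMonoid X)) (m : FreeMonoid X)
    (hsig : Q.sigW m = Q.sig g)
    (f h : MonoidAlgebra R (FreeMonoid X)) (lam : R) (a b : FreeMonoid X)
    (hdvd : a * m * b ∈ f.coeff.support)
    (hh : h = f + lam • (mono R a * g * mono R b)) :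
    Q.sig f ⊆ Q.sig h ∧ Q.sig f ⊆ Q.sigW (a * m * b) := by
  have hf : Q.sig f ⊆ Q.sigW (a * m * b) := Q.sig_subset_sigW hdvd
  have hag : Q.sig f ⊆ Q.sig (lam • (mono R a * g * mono R b)) :=
    hf.trans ((Q.sigW_mul_mul_subset_sig hsig.le a b).trans (Q.sig_subset_sig_smul lam _))
  rw [hh]
  exact ⟨(Set.subset_inter subset_rfl hag).trans (Q.sig_inter_sig_subset_sig_add _ _), hf⟩

/-- rewriting with a divisor monomial of minimal signature only increases
signatures. -/
theorem rew_and_signatures {V E X R : Type*} [CommRing R] (Q : LQuiver V E X)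
    (g : MonoidAlgebra R (FreeMonoid X)) (m : FreeMonoid X)
    (hm : m ∈ g.coeff.support) (hsig : Q.sigW m = Q.sig g)
    (f h : MonoidAlgebra R (FreeMonoid X)) (lam : R) (a b : FreeMonoid X)
    (hdvd : a * m * b ∈ f.coeff.support)
    (hh : h = f + lam • (mono R a * g * mono R b)) :
    Q.sig f ⊆ Q.sig h ∧ Q.sig f ⊆ Q.sigW (a * m * b) :=
  rew_and_signatures_general Q g m hsig f h lam a b hdvd hh
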